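/- arXiv:2510.03196 — 5 statements merged into one kernel-verified Lean document; each statement's English description precedes it below -/
import Mathlib

section
/- In an α-snowflake metric space (X, d^α) with α ∈ (0,1), every triple of points x, y, z satisfies d^α(x,y) ≤ max{ d^α(x,z) + (2^α − 1)·d^α(z,y), (2^α − 1)·d^α(x,z) + d^α(z,y) }. -/
/-!
`t ↦ t ^ α` is concave on `[0, ∞)` for `α ∈ [0, 1]`, so its increments over an interval of fixed
length `b` decrease as the interval moves right. Comparing the increment on `[a, a + b]` with the
one on `[b, b + b]` for `b ≤ a` gives `(a + b) ^ α ≤ a ^ α + (2 ^ α - 1) * b ^ α`; apply this to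
the triangle inequality `d(x, y) ≤ d(x, z) + d(z, y)` with the larger of the two distances as `a`.
-/

open Real Set

theorem ConcaveOn.add_sub_le_add_sub {s : Set ℝ} {f : ℝ → ℝ} (hf : ConcaveOn ℝ s f) {a b d : ℝ}
    (ha : a ∈ s) (hbd : b + d ∈ s) (hab : a ≤ b) (hd : 0 ≤ d) :
    f (b + d) - f b ≤ f (a + d) - f a := by
  rcases (add_nonneg (sub_nonneg.2 hab) hd).eq_or_lt with h | hpos
  · obtain rfl : b = a := by linarith
    obtain rfl : d = 0 := by linarith
    simp
  -- `b` and `a + d` are the two convex combinations of `a` and `b + d` with swapped weights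
  set t := (b - a) / (b - a + d)
  set u := d / (b - a + d)
  have ht : 0 ≤ t := div_nonneg (sub_nonneg.2 hab) hpos.le
  have hu : 0 ≤ u := div_nonneg hd hpos.le
  have htu : t + u = 1 := by rw [← add_div, div_self hpos.ne']
  have hb : u • a + t • (b + d) = b := by
    simp only [smul_eq_mul, t, u]; field_simp; ring
  have had : t • a + u • (b + d) = a + d := by
    simp only [smul_eq_mul, t, u]; field_simp; ring
  have h₁ := hf.2 ha hbd hu ht (by linarith)
  have h₂ := hf.2 ha hbd ht hu htu
  rw [hb] at h₁
  rw [had] at h₂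
  simp only [smul_eq_mul] at h₁ h₂
  linear_combination h₁ + h₂ - (f a + f (b + d)) * htu

theorem Real.add_rpow_le_rpow_add_two_rpow_sub_one_mul {α a b : ℝ} (hα₀ : 0 ≤ α) (hα₁ : α ≤ 1)
    (hb : 0 ≤ b) (hba : b ≤ a) :
    (a + b) ^ α ≤ a ^ α + ((2:ℝ) ^ α - 1) * b ^ α := by
  have hinc := (concaveOn_rpow hα₀ hα₁).add_sub_le_add_sub (mem_Ici.2 hb)
    (mem_Ici.2 (add_nonneg (hb.trans hba) hb)) hba hb
  have h2b : (b + b) ^ α = (2:ℝ) ^ α * b ^ α := by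
    rw [← two_mul, mul_rpow zero_le_two hb]
  linarith

theorem Real.add_rpow_le_max {α a b : ℝ} (hα₀ : 0 ≤ α) (hα₁ : α ≤ 1) (ha : 0 ≤ a) (hb : 0 ≤ b) :
    (a + b) ^ α ≤ max (a ^ α + ((2:ℝ) ^ α - 1) * b ^ α) (((2:ℝ) ^ α - 1) * a ^ α + b ^ α) := by
  rcases le_total b a with hba | hab
  · exact le_max_of_le_left (add_rpow_le_rpow_add_two_rpow_sub_one_mul hα₀ hα₁ hb hba)
  · refine le_max_of_le_right ?_
    rw [add_comm a, add_comm _ (b ^ α)]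
    exact add_rpow_le_rpow_add_two_rpow_sub_one_mul hα₀ hα₁ ha hab

/-- In an `α`-snowflake metric space `(X, d^α)` with `α ∈ (0,1)`, every triple of points
`x, y, z` satisfies the small rough angle inequality
`d^α(x,y) ≤ max { d^α(x,z) + (2^α − 1)·d^α(z,y), (2^α − 1)·d^α(x,z) + d^α(z,y) }`. -/
theorem snowflake_small_rough_angles (Y : Type*) [MetricSpace Y] (α : ℝ)
    (h0 : 0 < α) (h1 : α < 1) (x y z : Y) :
    dist x y ^ α ≤
      max (dist x z ^ α + ((2:ℝ) ^ α - 1) * dist z y ^ α)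
          (((2:ℝ) ^ α - 1) * dist x z ^ α + dist z y ^ α) :=
  (rpow_le_rpow dist_nonneg (dist_triangle x z y) h0.le).trans
    (add_rpow_le_max h0.le h1.le dist_nonneg dist_nonneg)
end

section
/- If a metric space (X, d) satisfies the SRA_k(ε, α) condition for some k ∈ ℕ, ε > 0, α > 0, then (X, d) is not line-fitting. -/
/-!
Fix an SRA space `X` and put `m = k - 1`. If `X` were line-fitting, then for every `δ > 0` some
rescaling `c · d` of `X` would admit a map `a : [0,1] → X` distorting distances by less than `δ`.
The images `a (i / m)`, `i ≤ m`, of the grid points are then `(k, ε)`-equally spaced once `δ` is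
small, so SRA forces `(1 + α)(1 - δ) < m (1/m + δ)`, which fails as `δ → 0`.
-/

/-- A function `d : X → X → ℝ` is a metric. -/
def IsMetric {X : Type*} (d : X → X → ℝ) : Prop :=
  (∀ x y, 0 ≤ d x y) ∧ (∀ x y, d x y = 0 ↔ x = y) ∧ (∀ x y, d x y = d y x) ∧
    (∀ x y z, d x z ≤ d x y + d y z)

/-- The `α`-small rough angle condition for `(k, ε)`-equally-spaced points:
for every `k` points `x 0, …, x (k-1)` whose consecutive distances satisfy
`max ≤ (1+ε)·min`, the sum of consecutive distances is at least `(1+α)` times the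
distance of the endpoints. -/
def SRA (X : Type*) [MetricSpace X] (k : ℕ) (ε α : ℝ) : Prop :=
  ∀ x : ℕ → X,
    (∀ i, i + 1 < k → ∀ j, j + 1 < k →
      dist (x i) (x (i + 1)) ≤ (1 + ε) * dist (x j) (x (j + 1))) →
    (1 + α) * dist (x 0) (x (k - 1)) ≤ ∑ i ∈ Finset.range (k - 1), dist (x i) (x (i + 1))

/-- `(X, d)` is line-fitting: for every `n ≥ 1` there is a metric `D` on `X ⊔ [0,1]`
restricting to the Euclidean metric on `[0,1]`, restricting to `c·d` on `X` for some
`c > 0`, and such that every point of `[0,1]` is within `D`-distance `1/n` of `X`. -/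
def LineFitting (X : Type*) [MetricSpace X] : Prop :=
  ∀ n : ℕ, 0 < n →
    ∃ (D : (X ⊕ ↥unitInterval) → (X ⊕ ↥unitInterval) → ℝ) (c : ℝ), 0 < c ∧
      IsMetric D ∧
      (∀ s u : ↥unitInterval, D (Sum.inr s) (Sum.inr u) = |(s : ℝ) - (u : ℝ)|) ∧
      (∀ a b : X, D (Sum.inl a) (Sum.inl b) = c * dist a b) ∧
      (∀ u : ↥unitInterval, ∃ a : X, D (Sum.inr u) (Sum.inl a) < 1 / n)

open Set

theorem IsMetric.abs_sub_le_add {Y : Type*} {D : Y → Y → ℝ} (hD : IsMetric D) (p q p' q' : Y) :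
    |D p' q' - D p q| ≤ D p p' + D q q' := by
  obtain ⟨-, -, hsymm, htri⟩ := hD
  rw [abs_sub_le_iff]
  constructor
  · linarith [htri p' p q', htri p q q', hsymm p p']
  · linarith [htri p p' q, htri p' q' q, hsymm q q']

theorem coe_projIcc_natCast_div {i m : ℕ} (hi : i ≤ m) :
    (projIcc (0 : ℝ) 1 zero_le_one (i / m) : ℝ) = i / m := by
  rw [projIcc_of_mem]
  exact ⟨by positivity, div_le_one_of_le₀ (by exact_mod_cast hi) (by positivity)⟩

section

variable {X : Type*} [MetricSpace X]

def IsUnitIntervalApprox (c δ : ℝ) (a : unitInterval → X) : Prop :=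
  ∀ s u, |c * dist (a s) (a u) - dist s u| < δ

theorem LineFitting.exists_isUnitIntervalApprox (h : LineFitting X) {δ : ℝ} (hδ : 0 < δ) :
    ∃ c > 0, ∃ a : unitInterval → X, IsUnitIntervalApprox c δ a := by
  obtain ⟨n, hn⟩ := exists_nat_gt (2 / δ)
  have hn₀ : 0 < n := by exact_mod_cast (div_pos two_pos hδ).trans hn
  obtain ⟨D, c, hc, hD, hline, hX, hnear⟩ := h n hn₀
  choose a ha using hnear
  refine ⟨c, hc, a, fun s u ↦ ?_⟩
  rw [← hX, Subtype.dist_eq, Real.dist_eq, ← hline]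
  calc _ ≤ D (.inr s) (.inl (a s)) + D (.inr u) (.inl (a u)) := hD.abs_sub_le_add ..
    _ < 1 / n + 1 / n := add_lt_add (ha s) (ha u)
    _ = 2 / n := by ring
    _ < δ := by rwa [div_lt_iff₀ (by positivity), ← div_lt_iff₀' hδ]

theorem SRA.mul_dist_le_mul {k : ℕ} {ε α : ℝ} (h : SRA X k ε α) (hε : 0 ≤ 1 + ε) {c lo hi : ℝ}
    (hc : 0 < c) (hlohi : hi ≤ (1 + ε) * lo) {x : ℕ → X}
    (hx : ∀ i, i + 1 < k → c * dist (x i) (x (i + 1)) ∈ Icc lo hi) :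
    (1 + α) * (c * dist (x 0) (x (k - 1))) ≤ (k - 1 : ℕ) * hi := by
  have hspaced : ∀ i, i + 1 < k → ∀ j, j + 1 < k →
      dist (x i) (x (i + 1)) ≤ (1 + ε) * dist (x j) (x (j + 1)) := by
    intro i hi j hj
    refine le_of_mul_le_mul_left ?_ hc
    calc c * dist (x i) (x (i + 1)) ≤ (1 + ε) * lo := (hx i hi).2.trans hlohi
      _ ≤ (1 + ε) * (c * dist (x j) (x (j + 1))) := mul_le_mul_of_nonneg_left (hx j hj).1 hε
      _ = _ := by ring
  calc (1 + α) * (c * dist (x 0) (x (k - 1)))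
      = c * ((1 + α) * dist (x 0) (x (k - 1))) := by ring
    _ ≤ c * ∑ i ∈ Finset.range (k - 1), dist (x i) (x (i + 1)) :=
      mul_le_mul_of_nonneg_left (h x hspaced) hc.le
    _ = ∑ i ∈ Finset.range (k - 1), c * dist (x i) (x (i + 1)) := Finset.mul_sum ..
    _ ≤ (k - 1 : ℕ) * hi := by
      simpa using Finset.sum_le_card_nsmul (Finset.range (k - 1))
        (fun i ↦ c * dist (x i) (x (i + 1))) hi fun i hi' ↦
          (hx i (by rw [Finset.mem_range] at hi'; omega)).2

theorem SRA.lt_mul_of_isUnitIntervalApprox {m : ℕ} {ε α : ℝ} (h : SRA X (m + 1) ε α)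
    (hm : 0 < m) (hε : 0 < ε) (hα : 0 < α) {c δ : ℝ} (hc : 0 < c) {a : unitInterval → X}
    (ha : IsUnitIntervalApprox c δ a) (hδ : δ * (2 + ε) * m ≤ ε) :
    α < δ * (m + 1 + α) := by
  have hm' : (0 : ℝ) < m := by exact_mod_cast hm
  set x : ℕ → X := fun i ↦ a (projIcc 0 1 zero_le_one (i / m))
  have hx : ∀ i j, i ≤ m → j ≤ m → |c * dist (x i) (x j) - |(i - j : ℝ)| / m| < δ := by
    intro i j hi hj
    have := ha (projIcc 0 1 zero_le_one (i / m)) (projIcc 0 1 zero_le_one (j / m))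
    rwa [Subtype.dist_eq, Real.dist_eq, coe_projIcc_natCast_div hi, coe_projIcc_natCast_div hj,
      ← sub_div, abs_div, Nat.abs_cast] at this
  have hsteps : ∀ i, i + 1 < m + 1 →
      c * dist (x i) (x (i + 1)) ∈ Icc (1 / m - δ) (1 / m + δ) := by
    intro i hi
    have := hx i (i + 1) (by omega) (by omega)
    rw [Nat.cast_succ, sub_add_cancel_left, abs_neg, abs_one, abs_sub_lt_iff] at this
    constructor <;> linarith
  have hends : 1 - δ < c * dist (x 0) (x m) := by
    have := hx 0 m (Nat.zero_le m) le_rfl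
    rw [Nat.cast_zero, zero_sub, abs_neg, Nat.abs_cast, div_self hm'.ne', abs_sub_lt_iff] at this
    linarith
  have hlohi : 1 / m + δ ≤ (1 + ε) * (1 / m - δ) := by
    rw [← sub_nonneg]
    have : (1 + ε) * (1 / m - δ) - (1 / m + δ) = (ε - δ * (2 + ε) * m) / m := by
      field_simp; ring
    rw [this]
    exact div_nonneg (by linarith) hm'.le
  have hsra := h.mul_dist_le_mul (by linarith) hc hlohi hsteps
  simp only [add_tsub_cancel_right] at hsra
  have hcontra : (1 + α) * (1 - δ) < 1 + m * δ :=
    calc (1 + α) * (1 - δ) < (1 + α) * (c * dist (x 0) (x m)) :=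
          mul_lt_mul_of_pos_left hends (by linarith)
      _ ≤ m * (1 / m + δ) := hsra
      _ = 1 + m * δ := by field_simp
  linarith

end

/-- If a metric space `(X, d)` satisfies the `SRA_k(ε, α)` condition for some
`k ≥ 2`, `ε > 0`, `α > 0`, then `(X, d)` is not line-fitting. -/
theorem not_lineFitting_of_SRA (X : Type*) [MetricSpace X] (k : ℕ) (hk : 2 ≤ k)
    (ε α : ℝ) (hε : 0 < ε) (hα : 0 < α) (hSRA : SRA X k ε α) :
    ¬ LineFitting X := by
  intro hLF
  obtain ⟨m, rfl⟩ : ∃ m, k = m + 1 := ⟨k - 1, by omega⟩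
  have hm : (0 : ℝ) < m := by exact_mod_cast (by omega : 0 < m)
  set δ := min (ε / ((2 + ε) * m)) (α / (m + 1 + α))
  have hδ : 0 < δ := lt_min (by positivity) (by positivity)
  obtain ⟨c, hc, a, ha⟩ := hLF.exists_isUnitIntervalApprox hδ
  have hδε : δ * (2 + ε) * m ≤ ε := by
    rw [mul_assoc, ← le_div_iff₀ (by positivity)]
    exact min_le_left ..
  have hδα : δ * (m + 1 + α) ≤ α := by
    rw [← le_div_iff₀ (by positivity)]
    exact min_le_right ..
  exact (hSRA.lt_mul_of_isUnitIntervalApprox (by omega) hε hα hc ha hδε).not_ge hδα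
end

section
/- If every ultralimit of (X,d) and every ultralimit of (Y,d') contains no non-constant geodesic, and every geodesic in a product metric space projects to a (reparametrized) geodesic in each factor, then every ultralimit of the product (X × Y, d × d') contains no non-constant geodesic. Combined with the characterization of spaces biLipschitz equivalent to snowflakes, the product X × Y is biLipschitz equivalent to a snowflake if and only if both X and Y are. -/
/-- BiLipschitz equivalence of two distance functions. -/
def BiLipEquiv {X Y : Type*} (dX : X → X → ℝ) (dY : Y → Y → ℝ) : Prop :=
  ∃ (f : X → Y) (C : ℝ), 1 ≤ C ∧ Function.Surjective f ∧
    ∀ x x', C⁻¹ * dX x x' ≤ dY (f x) (f x') ∧ dY (f x) (f x') ≤ C * dX x x'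

/-- `(X, d)` is biLipschitz equivalent to a snowflake. -/
def BiLipToSnowflake {X : Type*} (d : X → X → ℝ) : Prop :=
  ∃ α : ℝ, 0 < α ∧ α < 1 ∧
    ∃ ρ : X → X → ℝ, IsMetric ρ ∧ BiLipEquiv d (fun a b => ρ a b ^ α)

/-- The `ℓ²` product of two distance functions. -/
noncomputable def prodDist {X Y : Type*} (d : X → X → ℝ) (d' : Y → Y → ℝ) :
    X × Y → X × Y → ℝ :=
  fun p q => Real.sqrt (d p.1 q.1 ^ 2 + d' p.2 q.2 ^ 2)

/-- Some ultralimit of `(X, d)` contains a non-constant geodesic, expressed at the level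
of representative sequences: there are a non-principal ultrafilter `ω`, scaling factors
`rₙ > 0`, basepoints `pₙ`, and a family `γ` of `ω`-admissible sequences indexed by
`[0,1]` whose `ω`-limit distances are `|t − s| · Λ` with `Λ > 0`. -/
def HasGeodesicUltralimit {X : Type*} (d : X → X → ℝ) : Prop :=
  ∃ ω : Ultrafilter ℕ, (ω : Filter ℕ) ≤ Filter.cofinite ∧
    ∃ (r : ℕ → ℝ) (p : ℕ → X) (γ : ℝ → ℕ → X) (Λ : ℝ),
      (∀ n, 0 < r n) ∧ 0 < Λ ∧
      (∀ t ∈ Set.Icc (0:ℝ) 1, ∃ M, ∀ᶠ n in (ω : Filter ℕ), r n * d (p n) (γ t n) ≤ M) ∧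
      (∀ t ∈ Set.Icc (0:ℝ) 1, ∀ s ∈ Set.Icc (0:ℝ) 1,
        Filter.Tendsto (fun n => r n * d (γ t n) (γ s n)) (ω : Filter ℕ)
          (nhds (|t - s| * Λ)))

lemma proj1_le_prodDist {X Y : Type*} (d : X → X → ℝ) (d' : Y → Y → ℝ)
    (hd : IsMetric d) (p q : X × Y) : d p.1 q.1 ≤ prodDist d d' p q := by
  have h0 := hd.1 p.1 q.1
  rw [prodDist]
  nth_rewrite 1 [← Real.sqrt_sq h0]
  exact Real.sqrt_le_sqrt (le_add_of_nonneg_right (sq_nonneg _))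

lemma proj2_le_prodDist {X Y : Type*} (d : X → X → ℝ) (d' : Y → Y → ℝ)
    (hd' : IsMetric d') (p q : X × Y) : d' p.2 q.2 ≤ prodDist d d' p q := by
  have h0 := hd'.1 p.2 q.2
  rw [prodDist]
  nth_rewrite 1 [← Real.sqrt_sq h0]
  exact Real.sqrt_le_sqrt (le_add_of_nonneg_left (sq_nonneg _))

lemma geod_of_prod_proj1 {X Y : Type*} [Nonempty Y] (d : X → X → ℝ) (d' : Y → Y → ℝ)
    (hd : IsMetric d) (hd' : IsMetric d')
    (h : HasGeodesicUltralimit d) : HasGeodesicUltralimit (prodDist d d') := by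
  obtain ⟨ω, hω, r, p, γ, Λ, hr, hΛ, hbdd, hlim⟩ := h
  obtain ⟨y₀⟩ := ‹Nonempty Y›
  have hz : d' y₀ y₀ = 0 := (hd'.2.1 y₀ y₀).mpr rfl
  have hkey : ∀ a b : X, prodDist d d' (a, y₀) (b, y₀) = d a b := by
    intro a b
    simp only [prodDist, hz]
    rw [show (0:ℝ) ^ 2 = 0 by ring, add_zero, Real.sqrt_sq (hd.1 a b)]
  refine ⟨ω, hω, r, fun n => (p n, y₀), fun t n => (γ t n, y₀), Λ, hr, hΛ, ?_, ?_⟩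
  · intro t ht
    obtain ⟨M, hM⟩ := hbdd t ht
    exact ⟨M, hM.mono fun n hn => by rw [hkey]; exact hn⟩
  · intro t ht s hs
    have := hlim t ht s hs
    convert this using 2 with n
    rw [hkey]

lemma geod_of_prod_proj2 {X Y : Type*} [Nonempty X] (d : X → X → ℝ) (d' : Y → Y → ℝ)
    (hd : IsMetric d) (hd' : IsMetric d')
    (h : HasGeodesicUltralimit d') : HasGeodesicUltralimit (prodDist d d') := by
  obtain ⟨ω, hω, r, p, γ, Λ, hr, hΛ, hbdd, hlim⟩ := h
  obtain ⟨x₀⟩ := ‹Nonempty X›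
  have hz : d x₀ x₀ = 0 := (hd.2.1 x₀ x₀).mpr rfl
  have hkey : ∀ a b : Y, prodDist d d' (x₀, a) (x₀, b) = d' a b := by
    intro a b
    simp only [prodDist, hz]
    rw [show (0:ℝ) ^ 2 = 0 by ring, zero_add, Real.sqrt_sq (hd'.1 a b)]
  refine ⟨ω, hω, r, fun n => (x₀, p n), fun t n => (x₀, γ t n), Λ, hr, hΛ, ?_, ?_⟩
  · intro t ht
    obtain ⟨M, hM⟩ := hbdd t ht
    exact ⟨M, hM.mono fun n hn => by rw [hkey]; exact hn⟩
  · intro t ht s hs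
    have := hlim t ht s hs
    convert this using 2 with n
    rw [hkey]


/-- If no ultralimit of `(X, d)` or of `(Y, d')` contains a non-constant geodesic, and
every geodesic in an ultralimit of the product projects to reparametrized geodesics in the
factors (at least one non-constant), then no ultralimit of the `ℓ²` product contains a
non-constant geodesic.  Combined with the characterization of spaces biLipschitz
equivalent to snowflakes (no ultralimit contains a non-constant geodesic), the product is
biLipschitz equivalent to a snowflake iff both factors are. -/
theorem product_snowflake {X Y : Type*} [Nonempty X] [Nonempty Y]
    (d : X → X → ℝ) (d' : Y → Y → ℝ) (hd : IsMetric d) (hd' : IsMetric d')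
    (hproj : ∀ ω : Ultrafilter ℕ, (ω : Filter ℕ) ≤ Filter.cofinite →
      ∀ (r : ℕ → ℝ) (γ : ℝ → ℕ → X × Y) (Λ : ℝ), (∀ n, 0 < r n) → 0 < Λ →
      (∀ t ∈ Set.Icc (0:ℝ) 1, ∀ s ∈ Set.Icc (0:ℝ) 1,
        Filter.Tendsto (fun n => r n * prodDist d d' (γ t n) (γ s n)) (ω : Filter ℕ)
          (nhds (|t - s| * Λ))) →
      ∃ Λ₁ Λ₂ : ℝ, 0 ≤ Λ₁ ∧ 0 ≤ Λ₂ ∧ (0 < Λ₁ ∨ 0 < Λ₂) ∧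
        (∀ t ∈ Set.Icc (0:ℝ) 1, ∀ s ∈ Set.Icc (0:ℝ) 1,
          Filter.Tendsto (fun n => r n * d (γ t n).1 (γ s n).1) (ω : Filter ℕ)
            (nhds (|t - s| * Λ₁)) ∧
          Filter.Tendsto (fun n => r n * d' (γ t n).2 (γ s n).2) (ω : Filter ℕ)
            (nhds (|t - s| * Λ₂))))
    (hcharX : BiLipToSnowflake d ↔ ¬ HasGeodesicUltralimit d)
    (hcharY : BiLipToSnowflake d' ↔ ¬ HasGeodesicUltralimit d')
    (hcharP : BiLipToSnowflake (prodDist d d') ↔ ¬ HasGeodesicUltralimit (prodDist d d')) :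
    ((¬ HasGeodesicUltralimit d ∧ ¬ HasGeodesicUltralimit d') →
      ¬ HasGeodesicUltralimit (prodDist d d')) ∧
    (BiLipToSnowflake (prodDist d d') ↔ (BiLipToSnowflake d ∧ BiLipToSnowflake d')) := by

  have main : (¬ HasGeodesicUltralimit d ∧ ¬ HasGeodesicUltralimit d') →
      ¬ HasGeodesicUltralimit (prodDist d d') := by
    rintro ⟨hX, hY⟩ ⟨ω, hω, r, p, γ, Λ, hr, hΛ, hbdd, hlim⟩
    obtain ⟨Λ₁, Λ₂, h1, h2, hpos, hlims⟩ := hproj ω hω r γ Λ hr hΛ hlim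
    rcases hpos with h | h
    · refine hX ⟨ω, hω, r, fun n => (p n).1, fun t n => (γ t n).1, Λ₁, hr, h, ?_, ?_⟩
      · intro t ht
        obtain ⟨M, hM⟩ := hbdd t ht
        refine ⟨M, hM.mono fun n hn => le_trans ?_ hn⟩
        exact mul_le_mul_of_nonneg_left (proj1_le_prodDist d d' hd _ _) (hr n).le
      · exact fun t ht s hs => (hlims t ht s hs).1
    · refine hY ⟨ω, hω, r, fun n => (p n).2, fun t n => (γ t n).2, Λ₂, hr, h, ?_, ?_⟩
      · intro t ht
        obtain ⟨M, hM⟩ := hbdd t ht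
        refine ⟨M, hM.mono fun n hn => le_trans ?_ hn⟩
        exact mul_le_mul_of_nonneg_left (proj2_le_prodDist d d' hd' _ _) (hr n).le
      · exact fun t ht s hs => (hlims t ht s hs).2
  refine ⟨main, ?_⟩
  rw [hcharX, hcharY, hcharP]
  constructor
  · intro hP
    exact ⟨fun h => hP (geod_of_prod_proj1 d d' hd hd' h),
           fun h => hP (geod_of_prod_proj2 d d' hd hd' h)⟩
  · exact main
end

section
/- In the ℓ² product of two metric spaces, if γ : [0,1] → X × Y is a geodesic, then each coordinate projection of γ is an affinely reparametrized geodesic in the corresponding factor, i.e., d(pr_X γ(t), pr_X γ(s)) = |t−s|·d(pr_X γ(0), pr_X γ(1)) for all t, s ∈ [0,1], and similarly for Y. -/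
private lemma sq_cancel {x y : ℝ} (hx : 0 ≤ x) (hy : 0 ≤ y) (h : x^2 = y^2) : x = y := by
  calc x = Real.sqrt (x^2) := (Real.sqrt_sq hx).symm
    _ = Real.sqrt (y^2) := by rw [h]
    _ = y := Real.sqrt_sq hy

private lemma le_of_sq_le {x y : ℝ} (hx : 0 ≤ x) (hy : 0 ≤ y) (h : x^2 ≤ y^2) : x ≤ y := by
  calc x = Real.sqrt (x^2) := (Real.sqrt_sq hx).symm
    _ ≤ Real.sqrt (y^2) := Real.sqrt_le_sqrt h
    _ = y := Real.sqrt_sq hy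

set_option maxHeartbeats 2000000 in
private lemma key_alg (a b p q r s t : ℝ) (ha : 0 ≤ a) (hb : 0 ≤ b)
    (hp : 0 ≤ p) (hq : 0 ≤ q) (hr : 0 ≤ r) (hs : 0 ≤ s) (ht : 0 ≤ t) (ht1 : t ≤ 1)
    (h1 : p^2 + q^2 = t^2 * (a^2 + b^2))
    (h2 : r^2 + s^2 = (1-t)^2 * (a^2 + b^2))
    (h3 : a ≤ p + r) (h4 : b ≤ q + s) :
    p = t * a ∧ q = t * b := by
  have hu : 0 ≤ p*r + q*s := by positivity
  have hc : 0 ≤ t*(1-t)*(a^2+b^2) := by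
    have h' : (0:ℝ) ≤ 1 - t := by linarith
    positivity
  have hprod : (t*(1-t)*(a^2+b^2))^2 = (p^2+q^2)*(r^2+s^2) := by
    linear_combination (-(r^2+s^2))*h1 - t^2*(a^2+b^2)*h2
  have e1 : p*r + q*s ≤ t*(1-t)*(a^2+b^2) := by
    apply le_of_sq_le hu hc
    rw [hprod]
    nlinarith [sq_nonneg (p*s - q*r)]
  have ea : a^2 ≤ (p+r)^2 := by nlinarith
  have eb : b^2 ≤ (q+s)^2 := by nlinarith
  have e2 : t*(1-t)*(a^2+b^2) ≤ p*r + q*s := by nlinarith [ea, eb, h1, h2]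
  have heq : p*r + q*s = t*(1-t)*(a^2+b^2) := le_antisymm e1 e2
  have hsum : (p+r)^2 + (q+s)^2 = a^2 + b^2 := by linear_combination h1 + h2 + 2*heq
  have ha2 : (p+r)^2 = a^2 := by linarith
  have hb2 : (q+s)^2 = b^2 := by linarith
  have hpr : p + r = a := sq_cancel (by linarith) ha ha2
  have hqs : q + s = b := sq_cancel (by linarith) hb hb2
  have hcs0 : (p*s - q*r)^2 = 0 := by
    linear_combination (r^2+s^2)*h1 + (t^2*(a^2+b^2))*h2 - (p*r+q*s + t*(1-t)*(a^2+b^2))*heq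
  have hcs : p*s = q*r := by
    have := pow_eq_zero_iff (n := 2) (by norm_num) |>.mp hcs0
    linarith
  have hpb : p * b = q * a := by linear_combination hcs - p*hqs + q*hpr
  rcases eq_or_lt_of_le (by positivity : (0:ℝ) ≤ a^2 + b^2) with h0 | h0
  · have z : ∀ x y : ℝ, 0 ≤ x → 0 ≤ y → x^2 + y^2 = 0 → x = 0 := by
      intro x y hx hy hxy
      have h1 : x^2 = 0 := by nlinarith [sq_nonneg x, sq_nonneg y]
      exact pow_eq_zero_iff (n := 2) (by norm_num) |>.mp h1
    have ha0 : a = 0 := z a b ha hb h0.symm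
    have hb0 : b = 0 := z b a hb ha (by linarith)
    have hp0 : p = 0 := z p q hp hq (by rw [h1, ← h0]; ring)
    have hq0 : q = 0 := z q p hq hp (by rw [add_comm, h1, ← h0]; ring)
    simp [ha0, hb0, hp0, hq0]
  · have hp20 : (p^2 - (t*a)^2)*(a^2+b^2) = 0 := by
      linear_combination a^2*h1 + (p*b+q*a)*hpb
    have hq20 : (q^2 - (t*b)^2)*(a^2+b^2) = 0 := by
      linear_combination b^2*h1 - (p*b+q*a)*hpb
    have hp2 : p^2 = (t*a)^2 := by
      rcases mul_eq_zero.mp hp20 with h | h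
      · linarith
      · exact absurd h (by linarith)
    have hq2 : q^2 = (t*b)^2 := by
      rcases mul_eq_zero.mp hq20 with h | h
      · linarith
      · exact absurd h (by linarith)
    exact ⟨sq_cancel hp (mul_nonneg ht ha) hp2, sq_cancel hq (mul_nonneg ht hb) hq2⟩

private lemma squeeze_alg (a b u v c : ℝ) (ha : 0 ≤ a) (hb : 0 ≤ b) (hc : 0 ≤ c)
    (hu : c*a ≤ u) (hv : c*b ≤ v) (h : u^2 + v^2 = c^2*(a^2+b^2)) :
    u = c*a ∧ v = c*b := by
  have hca : 0 ≤ c*a := mul_nonneg hc ha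
  have hcb : 0 ≤ c*b := mul_nonneg hc hb
  have h1 : (c*a)^2 ≤ u^2 := pow_le_pow_left₀ hca hu 2
  have h2 : (c*b)^2 ≤ v^2 := pow_le_pow_left₀ hcb hv 2
  have hr : c^2*(a^2+b^2) = (c*a)^2 + (c*b)^2 := by ring
  have hu2 : u^2 = (c*a)^2 := by linarith
  have hv2 : v^2 = (c*b)^2 := by linarith
  exact ⟨sq_cancel (le_trans hca hu) hca hu2, sq_cancel (le_trans hcb hv) hcb hv2⟩



/-- In the `ℓ²` product of two metric spaces, every geodesic `γ : [0,1] → X × Y` projects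
to an affinely reparametrized geodesic in each factor:
`d(pr_X γ(t), pr_X γ(s)) = |t−s|·d(pr_X γ(0), pr_X γ(1))` for all `t, s ∈ [0,1]`, and
similarly for `Y`. -/
theorem product_geodesic_projections {X Y : Type*} [MetricSpace X] [MetricSpace Y]
    (γ : ℝ → X × Y)
    (hgeo : ∀ t ∈ Set.Icc (0:ℝ) 1, ∀ s ∈ Set.Icc (0:ℝ) 1,
      Real.sqrt (dist (γ t).1 (γ s).1 ^ 2 + dist (γ t).2 (γ s).2 ^ 2) =
        |t - s| * Real.sqrt (dist (γ 0).1 (γ 1).1 ^ 2 + dist (γ 0).2 (γ 1).2 ^ 2)) :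
    ∀ t ∈ Set.Icc (0:ℝ) 1, ∀ s ∈ Set.Icc (0:ℝ) 1,
      dist (γ t).1 (γ s).1 = |t - s| * dist (γ 0).1 (γ 1).1 ∧
      dist (γ t).2 (γ s).2 = |t - s| * dist (γ 0).2 (γ 1).2 := by
  set a := dist (γ 0).1 (γ 1).1 with hadef
  set b := dist (γ 0).2 (γ 1).2 with hbdef
  have ha : 0 ≤ a := dist_nonneg
  have hb : 0 ≤ b := dist_nonneg
  have hab : 0 ≤ a^2 + b^2 := by positivity
  -- squared form of the geodesic hypothesis
  have hsq : ∀ t ∈ Set.Icc (0:ℝ) 1, ∀ s ∈ Set.Icc (0:ℝ) 1,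
      dist (γ t).1 (γ s).1 ^ 2 + dist (γ t).2 (γ s).2 ^ 2 = (t-s)^2 * (a^2+b^2) := by
    intro t ht s hs
    have h := hgeo t ht s hs
    have hA : (0:ℝ) ≤ dist (γ t).1 (γ s).1 ^ 2 + dist (γ t).2 (γ s).2 ^ 2 := by positivity
    calc dist (γ t).1 (γ s).1 ^ 2 + dist (γ t).2 (γ s).2 ^ 2
        = (Real.sqrt (dist (γ t).1 (γ s).1 ^ 2 + dist (γ t).2 (γ s).2 ^ 2))^2 :=
          (Real.sq_sqrt hA).symm
      _ = (|t-s| * Real.sqrt (a^2+b^2))^2 := by rw [h]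
      _ = (t-s)^2 * (a^2+b^2) := by
          rw [mul_pow, sq_abs, Real.sq_sqrt hab]
  have h0 : (0:ℝ) ∈ Set.Icc (0:ℝ) 1 := by constructor <;> norm_num
  have h1' : (1:ℝ) ∈ Set.Icc (0:ℝ) 1 := by constructor <;> norm_num
  -- step 1 : distance from the initial point
  have step1 : ∀ t ∈ Set.Icc (0:ℝ) 1,
      dist (γ 0).1 (γ t).1 = t * a ∧ dist (γ 0).2 (γ t).2 = t * b := by
    intro t ht
    have e1 : dist (γ 0).1 (γ t).1 ^ 2 + dist (γ 0).2 (γ t).2 ^ 2 = t^2 * (a^2+b^2) := by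
      have := hsq 0 h0 t ht
      calc dist (γ 0).1 (γ t).1 ^ 2 + dist (γ 0).2 (γ t).2 ^ 2
          = (0-t)^2 * (a^2+b^2) := this
        _ = t^2 * (a^2+b^2) := by ring
    have e2 : dist (γ t).1 (γ 1).1 ^ 2 + dist (γ t).2 (γ 1).2 ^ 2 = (1-t)^2 * (a^2+b^2) := by
      have := hsq t ht 1 h1'
      calc dist (γ t).1 (γ 1).1 ^ 2 + dist (γ t).2 (γ 1).2 ^ 2
          = (t-1)^2 * (a^2+b^2) := this
        _ = (1-t)^2 * (a^2+b^2) := by ring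
    exact key_alg a b _ _ _ _ t ha hb dist_nonneg dist_nonneg dist_nonneg dist_nonneg
      ht.1 ht.2 e1 e2 (dist_triangle (γ 0).1 (γ t).1 (γ 1).1)
      (dist_triangle (γ 0).2 (γ t).2 (γ 1).2)
  -- step 2 : for ordered parameters
  have main : ∀ t ∈ Set.Icc (0:ℝ) 1, ∀ s ∈ Set.Icc (0:ℝ) 1, t ≤ s →
      dist (γ t).1 (γ s).1 = (s-t) * a ∧ dist (γ t).2 (γ s).2 = (s-t) * b := by
    intro t ht s hs hts
    obtain ⟨e1t, e2t⟩ := step1 t ht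
    obtain ⟨e1s, e2s⟩ := step1 s hs
    have tri1 : (s-t)*a ≤ dist (γ t).1 (γ s).1 := by
      have := dist_triangle (γ 0).1 (γ t).1 (γ s).1
      rw [e1t, e1s] at this
      nlinarith [this]
    have tri2 : (s-t)*b ≤ dist (γ t).2 (γ s).2 := by
      have := dist_triangle (γ 0).2 (γ t).2 (γ s).2
      rw [e2t, e2s] at this
      nlinarith [this]
    have esq : dist (γ t).1 (γ s).1 ^ 2 + dist (γ t).2 (γ s).2 ^ 2
        = (s-t)^2 * (a^2+b^2) := by
      have := hsq t ht s hs
      calc dist (γ t).1 (γ s).1 ^ 2 + dist (γ t).2 (γ s).2 ^ 2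
          = (t-s)^2 * (a^2+b^2) := this
        _ = (s-t)^2 * (a^2+b^2) := by ring
    exact squeeze_alg a b _ _ (s-t) ha hb (by linarith) tri1 tri2 esq
  intro t ht s hs
  rcases le_total t s with h | h
  · have := main t ht s hs h
    have habs : |t - s| = s - t := by rw [abs_sub_comm, abs_of_nonneg (by linarith)]
    rw [habs]
    exact this
  · have := main s hs t ht h
    have habs : |t - s| = t - s := abs_of_nonneg (by linarith)
    rw [habs, dist_comm (γ t).1 (γ s).1, dist_comm (γ t).2 (γ s).2]
    exact this
end

section
/- Let γₙ > 0 be an increasing sequence converging to 1, X = { (xₙ) ∈ ℓ² : Σₙ |xₙ|^{2γₙ} < ∞ } with d((xₙ),(yₙ)) = (Σₙ |xₙ − yₙ|^{2γₙ})^{1/2}. Then for every k ∈ ℕ and α > 0 there exist k equally spaced points in X violating the inequality Σ_{i=1}^{k−1} d(xᵢ, xᵢ₊₁) ≥ (1+α)·d(x₁, x_k); specifically, for n large enough, the points x_i = (i·t)·eₙ, i = 1,…,k (multiples of the n-th coordinate vector, any t > 0), satisfy d(xᵢ, xᵢ₊₁) = t^{γₙ} for all i and Σᵢ d(xᵢ,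 xᵢ₊₁) = (k−1)·t^{γₙ} < (1+α)·((k−1)t)^{γₙ} = (1+α)·d(x₁, x_k). -/
/-!
Along the `n`-th coordinate axis the snowflake product metric is just `|s - s'| ^ γₙ`. For
`c = k - 1 > 0` we have `(1 + α) c ^ γₙ → (1 + α) c > c`, so for large `n` the `k - 1` unit
gaps of the equally spaced points, each of length `t ^ γₙ`, add up to less than `1 + α` times
the end-to-end distance `(c t) ^ γₙ = c ^ γₙ t ^ γₙ`.
-/

/-- The distance on the infinite snowflake product:
`d(x, y) = (Σₙ |xₙ − yₙ|^{2γₙ})^{1/2}`. -/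
noncomputable def snowDist (γ : ℕ → ℝ) (x y : ℕ → ℝ) : ℝ :=
  Real.sqrt (∑' n, |x n - y n| ^ (2 * γ n))

lemma snowDist_of_eq_of_ne {γ : ℕ → ℝ} (hγ : ∀ m, γ m ≠ 0) {n : ℕ} {x y : ℕ → ℝ}
    (h : ∀ m, m ≠ n → x m = y m) :
    snowDist γ x y = |x n - y n| ^ γ n := by
  have hterm : ∀ m, m ≠ n → |x m - y m| ^ (2 * γ m) = 0 := fun m hm => by
    rw [h m hm, sub_self, abs_zero, Real.zero_rpow (mul_ne_zero two_ne_zero (hγ m))]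
  have hnonneg : 0 ≤ |x n - y n| := abs_nonneg _
  rw [snowDist, tsum_eq_single n hterm, mul_comm, Real.rpow_mul hnonneg, Real.rpow_two,
    Real.sqrt_sq (Real.rpow_nonneg hnonneg _)]

lemma snowDist_ite_eq {γ : ℕ → ℝ} (hγ : ∀ m, γ m ≠ 0) (n : ℕ) (a b : ℝ) :
    snowDist γ (fun m => if m = n then a else 0) (fun m => if m = n then b else 0)
      = |a - b| ^ γ n := by
  have hoff : ∀ m, m ≠ n → (if m = n then a else 0) = if m = n then b else 0 := fun m hm => by
    rw [if_neg hm, if_neg hm]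
  rw [snowDist_of_eq_of_ne hγ hoff, if_pos rfl, if_pos rfl]

lemma eventually_lt_mul_rpow {γ : ℕ → ℝ} (hlim : Filter.Tendsto γ Filter.atTop (nhds 1))
    {c β : ℝ} (hc : 0 < c) (hβ : 1 < β) :
    ∀ᶠ n in Filter.atTop, c < β * c ^ γ n := by
  have hlim' : Filter.Tendsto (fun n => β * c ^ γ n) Filter.atTop (nhds (β * c ^ (1 : ℝ))) :=
    ((Real.continuousAt_const_rpow hc.ne').tendsto.comp hlim).const_mul β
  rw [Real.rpow_one] at hlim'
  exact hlim'.eventually_const_lt (lt_mul_left hc hβ)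

theorem infinite_snowflake_product_not_SRA_general (γ : ℕ → ℝ)
    (hpos : ∀ n, 0 < γ n)
    (hlim : Filter.Tendsto γ Filter.atTop (nhds 1))
    (k : ℕ) (hk : 2 ≤ k) (α : ℝ) (hα : 0 < α) (t : ℝ) (ht : 0 < t) :
    ∃ N : ℕ, ∀ n ≥ N, ∀ x : ℕ → ℕ → ℝ,
      (∀ i, x i = fun m => if m = n then (i : ℝ) * t else 0) →
      (∀ i, snowDist γ (x i) (x (i + 1)) = t ^ γ n) ∧
      (∑ i ∈ Finset.range (k - 1), snowDist γ (x (i + 1)) (x (i + 2))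
        = ((k : ℝ) - 1) * t ^ γ n) ∧
      snowDist γ (x 1) (x k) = (((k : ℝ) - 1) * t) ^ γ n ∧
      ((k : ℝ) - 1) * t ^ γ n < (1 + α) * (((k : ℝ) - 1) * t) ^ γ n := by
  have hγ : ∀ m, γ m ≠ 0 := fun m => (hpos m).ne'
  have hk' : (2 : ℝ) ≤ k := by exact_mod_cast hk
  obtain ⟨N, hN⟩ := Filter.eventually_atTop.1 <|
    eventually_lt_mul_rpow hlim (c := (k : ℝ) - 1) (by linarith) (lt_add_of_pos_right 1 hα)
  refine ⟨N, fun n hn x hx => ?_⟩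
  have hdist : ∀ i j : ℕ, snowDist γ (x i) (x j) = |(i : ℝ) * t - j * t| ^ γ n := fun i j => by
    rw [hx, hx, snowDist_ite_eq hγ]
  have hstep : ∀ i, snowDist γ (x i) (x (i + 1)) = t ^ γ n := fun i => by
    rw [hdist, Nat.cast_succ, show (i : ℝ) * t - (i + 1) * t = -t by ring, abs_neg, abs_of_pos ht]
  refine ⟨hstep, ?_, ?_, ?_⟩
  · rw [Finset.sum_congr rfl fun i _ => hstep (i + 1), Finset.sum_const, Finset.card_range,
      nsmul_eq_mul, Nat.cast_sub (by omega), Nat.cast_one]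
  · rw [hdist, Nat.cast_one, show 1 * t - k * t = -((k - 1) * t) by ring, abs_neg,
      abs_of_pos (by nlinarith)]
  · rw [Real.mul_rpow (by linarith) ht.le, ← mul_assoc]
    exact mul_lt_mul_of_pos_right (hN n hn) (Real.rpow_pos_of_pos ht _)

/-- Infinite products of snowflakes fail every SRA-type condition: if `γₙ ∈ (0,1)` is an
increasing sequence converging to `1`, then for every `k ≥ 2`, `α > 0` and `t > 0` there
is `N` such that for all `n ≥ N` the `k` equally spaced points `x i = (i·t)·eₙ`
(`i = 1, …, k`) along the `n`-th coordinate direction satisfy `d(xᵢ, xᵢ₊₁) = t^{γₙ}`,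
`Σ_{i=1}^{k−1} d(xᵢ, xᵢ₊₁) = (k−1)·t^{γₙ} < (1+α)·((k−1)·t)^{γₙ} = (1+α)·d(x₁, x_k)`,
violating the SRA lower bound `Σ d(xᵢ, xᵢ₊₁) ≥ (1+α)·d(x₁, x_k)`. -/
theorem infinite_snowflake_product_not_SRA (γ : ℕ → ℝ)
    (hpos : ∀ n, 0 < γ n) (hlt : ∀ n, γ n < 1) (hmono : StrictMono γ)
    (hlim : Filter.Tendsto γ Filter.atTop (nhds 1))
    (k : ℕ) (hk : 2 ≤ k) (α : ℝ) (hα : 0 < α) (t : ℝ) (ht : 0 < t) :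
    ∃ N : ℕ, ∀ n ≥ N, ∀ x : ℕ → ℕ → ℝ,
      (∀ i, x i = fun m => if m = n then (i : ℝ) * t else 0) →
      (∀ i, snowDist γ (x i) (x (i + 1)) = t ^ γ n) ∧
      (∑ i ∈ Finset.range (k - 1), snowDist γ (x (i + 1)) (x (i + 2))
        = ((k : ℝ) - 1) * t ^ γ n) ∧
      snowDist γ (x 1) (x k) = (((k : ℝ) - 1) * t) ^ γ n ∧
      ((k : ℝ) - 1) * t ^ γ n < (1 + α) * (((k : ℝ) - 1) * t) ^ γ n :=
  infinite_snowflake_product_not_SRA_general γ hpos hlim k hk α hα t ht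
end
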